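/- arXiv:2010.14363 — 3 statements merged into one kernel-verified Lean document; each statement's English description precedes it below -/
import Mathlib

section
/- Let V be a 2m×2m complex symmetric matrix and D ∈ ℂ^{2m}. Then for any multi-set E of indices from {1,...,2m} of size r, the value Π_{j∈E} (∂/∂x_j) applied to exp((1/2) x^T V x + D^T x), evaluated at x = 0, equals Σ_{π ∈ Π_{1,2}(E)} Π_{{i,j}∈π, pairs} v_ij · Π_{{k}∈π, singletons} d_k, i.e., the loop hafnian of the r×r matrix obtained from V by selecting rows and columns according to E (with repetition) and replacing the diagonal by the corresponding entries of D. -/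
open scoped Classical

/-- The loop hafnian of an `n × n` matrix: sum over partitions of `{0,…,n-1}` into
blocks of size 1 and 2 (encoded as involutions, fixed points being singleton blocks),
where a pair block `{i,j}` contributes `A i j` and a singleton block `{k}`
contributes the diagonal entry `A k k`. -/
noncomputable def lhafnian {n : ℕ} (A : Matrix (Fin n) (Fin n) ℂ) : ℂ :=
  ∑ σ ∈ Finset.univ.filter (fun σ : Equiv.Perm (Fin n) => σ * σ = 1),
    ∏ i ∈ Finset.univ.filter (fun i => i ≤ σ i), A i (σ i)

/-- Partial derivative in the `j`-th coordinate of a function of `N` complex variables. -/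
noncomputable def pderivCoord (N : ℕ) (j : Fin N) (f : (Fin N → ℂ) → ℂ) :
    (Fin N → ℂ) → ℂ :=
  fun x => fderiv ℂ f x (Pi.single j 1)

/-- Iterated partial derivatives along a list of coordinate indices. -/
noncomputable def pderivList (N : ℕ) : List (Fin N) → ((Fin N → ℂ) → ℂ) → ((Fin N → ℂ) → ℂ)
  | [], f => f
  | j :: js, f => pderivCoord N j (pderivList N js f)

section Aux

variable {N : ℕ} (V : Matrix (Fin N) (Fin N) ℂ) (D : Fin N → ℂ)

/-- The quadratic exponent. -/
noncomputable def lQ : (Fin N → ℂ) → ℂ :=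
  fun x => (1 / 2 : ℂ) * (∑ i, ∑ j, x i * V i j * x j) + ∑ i, D i * x i

/-- The affine function `D k + (V x)_k`. -/
noncomputable def lL (k : Fin N) : (Fin N → ℂ) → ℂ :=
  fun x => D k + ∑ l, V k l * x l

/-- The linear part of `lL` as a continuous linear map. -/
noncomputable def lLc (k : Fin N) : (Fin N → ℂ) →L[ℂ] ℂ :=
  ∑ l, V k l • ContinuousLinearMap.proj l

/-- Matrix entries occurring in the intermediate derivatives. -/
noncomputable def lW {n : ℕ} (T : Fin n → Fin N) (x : Fin N → ℂ) (a b : Fin n) : ℂ :=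
  if a = b then lL V D (T a) x else V (T a) (T b)

/-- The polynomial prefactor: loop hafnian with affine diagonal. -/
noncomputable def lG {n : ℕ} (T : Fin n → Fin N) (x : Fin N → ℂ) : ℂ :=
  ∑ σ ∈ Finset.univ.filter (fun σ : Equiv.Perm (Fin n) => σ * σ = 1),
    ∏ a ∈ Finset.univ.filter (fun a => a ≤ σ a), lW V D T x a (σ a)

lemma lLc_apply (k : Fin N) (v : Fin N → ℂ) : lLc V k v = ∑ l, V k l * v l := by
  simp [lLc]

lemma lLc_single (k j : Fin N) : lLc V k (Pi.single j 1) = V k j := by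
  simp [lLc_apply, Pi.single_apply, mul_ite]

lemma hasFDerivAt_lL (k : Fin N) (x : Fin N → ℂ) :
    HasFDerivAt (lL V D k) (lLc V k) x := by
  have h : lL V D k = fun x => D k + lLc V k x := by
    funext y; simp [lL, lLc_apply]
  rw [h]
  exact (lLc V k).hasFDerivAt.const_add (D k)

lemma hasFDerivAt_lQ (hV : V.IsSymm) (x : Fin N → ℂ) :
    HasFDerivAt (lQ V D)
      (∑ k, lL V D k x • (ContinuousLinearMap.proj k : (Fin N → ℂ) →L[ℂ] ℂ)) x := by
  have hsym : ∀ a b, V a b = V b a := fun a b => (hV.apply a b).symm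
  have hp : ∀ i : Fin N, HasFDerivAt (fun y : Fin N → ℂ => y i)
      (ContinuousLinearMap.proj i : (Fin N → ℂ) →L[ℂ] ℂ) x :=
    fun i => hasFDerivAt_apply i x
  have h1 : HasFDerivAt (fun y : Fin N → ℂ => (1 / 2 : ℂ) * (∑ i, ∑ l, y i * V i l * y l))
      ((1 / 2 : ℂ) • ∑ i, ∑ l,
        ((x i * V i l) • (ContinuousLinearMap.proj l : (Fin N → ℂ) →L[ℂ] ℂ)
          + x l • ((V i l) • (ContinuousLinearMap.proj i : (Fin N → ℂ) →L[ℂ] ℂ)))) x := by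
    refine HasFDerivAt.const_mul ?_ _
    refine HasFDerivAt.fun_sum fun i _ => ?_
    refine HasFDerivAt.fun_sum fun l _ => ?_
    exact ((hp i).mul_const (V i l)).mul (hp l)
  have h2 : HasFDerivAt (fun y : Fin N → ℂ => ∑ i, D i * y i)
      (∑ i, D i • (ContinuousLinearMap.proj i : (Fin N → ℂ) →L[ℂ] ℂ)) x :=
    HasFDerivAt.fun_sum fun i _ => (hp i).const_mul (D i)
  have h := h1.add h2
  refine h.congr_fderiv ?_
  refine ContinuousLinearMap.ext fun v => ?_
  simp only [ContinuousLinearMap.add_apply, ContinuousLinearMap.smul_apply,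
    ContinuousLinearMap.sum_apply, ContinuousLinearMap.proj_apply, smul_eq_mul, lL]
  have hsplit : (∑ i, ∑ l, (x i * V i l * v l + x l * (V i l * v i)))
      = (∑ i, ∑ l, x i * V i l * v l) + (∑ i, ∑ l, x l * (V i l * v i)) := by
    simp [Finset.sum_add_distrib]
  have hA : (∑ i, ∑ l, x i * V i l * v l) = ∑ i, ∑ l, x l * (V i l * v i) := by
    rw [Finset.sum_comm]
    refine Finset.sum_congr rfl fun b _ => Finset.sum_congr rfl fun c _ => ?_
    rw [hsym c b]; ring
  have hS : (∑ i, ∑ l, x l * (V i l * v i)) = ∑ k, (∑ l, V k l * x l) * v k := by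
    refine Finset.sum_congr rfl fun k _ => ?_
    rw [Finset.sum_mul]
    refine Finset.sum_congr rfl fun l _ => by ring
  have hRHS : ∑ k, (D k + ∑ l, V k l * x l) * v k
      = (∑ k, D k * v k) + ∑ k, (∑ l, V k l * x l) * v k := by
    simp [add_mul, Finset.sum_add_distrib]
  rw [hsplit, hA, hS, hRHS]
  ring

lemma lW_cons_succ {n : ℕ} (T : Fin n → Fin N) (j : Fin N) (x : Fin N → ℂ) (k l : Fin n) :
    lW V D (Fin.cons j T) x k.succ l.succ = lW V D T x k l := by
  simp only [lW, Fin.succ_inj, Fin.cons_succ]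

lemma inv_zero_iff {n : ℕ} (σ : Equiv.Perm (Fin n)) :
    (Equiv.Perm.decomposeFin.symm (0, σ)) * (Equiv.Perm.decomposeFin.symm (0, σ)) = 1
      ↔ σ * σ = 1 := by
  set τ := Equiv.Perm.decomposeFin.symm (0, σ) with hτ
  have h0 : τ 0 = 0 := Equiv.Perm.decomposeFin_symm_apply_zero 0 σ
  have hs : ∀ k : Fin n, τ k.succ = (σ k).succ := fun k => by
    rw [hτ, Equiv.Perm.decomposeFin_symm_apply_succ]; simp
  constructor
  · intro h
    have h' : ∀ m, τ (τ m) = m := fun m => by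
      have := Equiv.ext_iff.mp h m
      simpa [Equiv.Perm.mul_apply] using this
    refine Equiv.ext fun k => ?_
    simp only [Equiv.Perm.mul_apply, Equiv.Perm.one_apply]
    have := h' k.succ
    rw [hs k, hs (σ k)] at this
    exact Fin.succ_injective _ this
  · intro h
    have h' : ∀ k, σ (σ k) = k := fun k => by
      have := Equiv.ext_iff.mp h k
      simpa [Equiv.Perm.mul_apply] using this
    refine Equiv.ext fun m => ?_
    simp only [Equiv.Perm.mul_apply, Equiv.Perm.one_apply]
    refine Fin.cases ?_ (fun k => ?_) m
    · rw [h0, h0]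
    · rw [hs k, hs (σ k), h' k]

lemma inv_succ_iff {n : ℕ} (σ : Equiv.Perm (Fin n)) (i₀ : Fin n) :
    (Equiv.Perm.decomposeFin.symm (i₀.succ, σ)) * (Equiv.Perm.decomposeFin.symm (i₀.succ, σ)) = 1
      ↔ (σ * σ = 1 ∧ σ i₀ = i₀) := by
  set τ := Equiv.Perm.decomposeFin.symm (i₀.succ, σ) with hτ
  have h0 : τ 0 = i₀.succ := Equiv.Perm.decomposeFin_symm_apply_zero i₀.succ σ
  have hs : ∀ k : Fin n, τ k.succ = Equiv.swap 0 i₀.succ (σ k).succ := fun k => by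
    rw [hτ, Equiv.Perm.decomposeFin_symm_apply_succ]
  constructor
  · intro h
    have h' : ∀ m, τ (τ m) = m := fun m => by
      have := Equiv.ext_iff.mp h m
      simpa [Equiv.Perm.mul_apply] using this
    have hfix : σ i₀ = i₀ := by
      have h1 := h' 0
      rw [h0, hs i₀] at h1
      by_contra hne
      have h2 : (σ i₀).succ ≠ 0 := Fin.succ_ne_zero _
      have h3 : (σ i₀).succ ≠ i₀.succ := fun hh => hne (Fin.succ_injective _ hh)
      rw [Equiv.swap_apply_of_ne_of_ne h2 h3] at h1
      exact Fin.succ_ne_zero _ h1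
    refine ⟨?_, hfix⟩
    refine Equiv.ext fun k => ?_
    simp only [Equiv.Perm.mul_apply, Equiv.Perm.one_apply]
    by_cases hk : k = i₀
    · subst hk; rw [hfix, hfix]
    · have hσk : σ k ≠ i₀ := fun hh => hk (σ.injective (hh.trans hfix.symm))
      have e1 : τ k.succ = (σ k).succ := by
        rw [hs k]
        exact Equiv.swap_apply_of_ne_of_ne (Fin.succ_ne_zero _)
          (fun hh => hσk (Fin.succ_injective _ hh))
      have h2 := h' k.succ
      rw [e1, hs (σ k)] at h2
      by_cases h3 : σ (σ k) = i₀
      · exfalso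
        rw [h3, Equiv.swap_apply_right] at h2
        exact Fin.succ_ne_zero k h2.symm
      · rw [Equiv.swap_apply_of_ne_of_ne (Fin.succ_ne_zero _)
          (fun hh => h3 (Fin.succ_injective _ hh))] at h2
        exact Fin.succ_injective _ h2
  · rintro ⟨h, hfix⟩
    have h' : ∀ k, σ (σ k) = k := fun k => by
      have := Equiv.ext_iff.mp h k
      simpa [Equiv.Perm.mul_apply] using this
    refine Equiv.ext fun m => ?_
    simp only [Equiv.Perm.mul_apply, Equiv.Perm.one_apply]
    refine Fin.cases ?_ (fun k => ?_) m
    · rw [h0, hs i₀, hfix, Equiv.swap_apply_right]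
    · by_cases hk : k = i₀
      · subst hk
        rw [hs k, hfix, Equiv.swap_apply_right, h0]
      · have hσk : σ k ≠ i₀ := fun hh => hk (by rw [← hfix] at hh; exact σ.injective hh)
        rw [hs k, Equiv.swap_apply_of_ne_of_ne (Fin.succ_ne_zero _)
            (fun hh => hσk (Fin.succ_injective _ hh)),
          hs (σ k), Equiv.swap_apply_of_ne_of_ne (Fin.succ_ne_zero _)
            (fun hh => hk ((h' k).symm.trans (Fin.succ_injective _ hh))), h' k]

lemma lG_cons (hV : V.IsSymm) {n : ℕ} (T : Fin n → Fin N) (j : Fin N) (x : Fin N → ℂ) :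
    lG V D (Fin.cons j T) x
      = lL V D j x * lG V D T x
        + ∑ σ ∈ Finset.univ.filter (fun σ : Equiv.Perm (Fin n) => σ * σ = 1),
            ∑ a ∈ Finset.univ.filter (fun a => a ≤ σ a),
              (∏ b ∈ (Finset.univ.filter (fun b => b ≤ σ b)).erase a, lW V D T x b (σ b))
                * (if a = σ a then V (T a) j else 0) := by
  classical
  have hsym : ∀ a b, V a b = V b a := fun a b => (hV.apply a b).symm
  have main : ∀ σ : Equiv.Perm (Fin n),
      (∑ p : Fin (n + 1),
        (if (Equiv.Perm.decomposeFin.symm (p, σ)) * (Equiv.Perm.decomposeFin.symm (p, σ)) = 1 then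
          ∏ a ∈ Finset.univ.filter
              (fun a => a ≤ (Equiv.Perm.decomposeFin.symm (p, σ)) a),
            lW V D (Fin.cons j T) x a ((Equiv.Perm.decomposeFin.symm (p, σ)) a)
          else 0))
      = (if σ * σ = 1 then
            lL V D j x * ∏ a ∈ Finset.univ.filter (fun a => a ≤ σ a), lW V D T x a (σ a)
          else 0)
        + (if σ * σ = 1 then
            ∑ a ∈ Finset.univ.filter (fun a => a ≤ σ a),
              (∏ b ∈ (Finset.univ.filter (fun b => b ≤ σ b)).erase a, lW V D T x b (σ b))
                * (if a = σ a then V (T a) j else 0)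
          else 0) := by
    intro σ
    rw [Fin.sum_univ_succ]
    congr 1
    -- the `p = 0` term
    · rw [if_congr (inv_zero_iff σ) rfl rfl]
      by_cases h : σ * σ = 1
      · rw [if_pos h, if_pos h]
        set τ := Equiv.Perm.decomposeFin.symm ((0 : Fin (n + 1)), σ) with hτ
        have h0 : τ 0 = 0 := Equiv.Perm.decomposeFin_symm_apply_zero 0 σ
        have hs : ∀ k : Fin n, τ k.succ = (σ k).succ := fun k => by
          rw [hτ, Equiv.Perm.decomposeFin_symm_apply_succ]; simp
        rw [Finset.prod_filter, Finset.prod_filter, Fin.prod_univ_succ]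
        have hfac : (if (0 : Fin (n + 1)) ≤ τ 0 then lW V D (Fin.cons j T) x 0 (τ 0) else 1)
            = lL V D j x := by
          rw [h0]; simp [lW]
        rw [hfac]
        congr 1
        refine Finset.prod_congr rfl fun k _ => ?_
        rw [hs k]
        by_cases hk : k ≤ σ k
        · rw [if_pos (Fin.succ_le_succ_iff.mpr hk), if_pos hk, lW_cons_succ]
        · rw [if_neg (fun hh => hk (Fin.succ_le_succ_iff.mp hh)), if_neg hk]
      · rw [if_neg h, if_neg h]
    -- the `p = i₀.succ` terms
    · by_cases h : σ * σ = 1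
      · rw [if_pos h, Finset.sum_filter]
        refine Finset.sum_congr rfl fun i₀ _ => ?_
        by_cases hfix : σ i₀ = i₀
        · rw [if_pos ((inv_succ_iff σ i₀).mpr ⟨h, hfix⟩), if_pos (le_of_eq hfix.symm),
            if_pos hfix.symm]
          set τ := Equiv.Perm.decomposeFin.symm (i₀.succ, σ) with hτ
          have h0 : τ 0 = i₀.succ := Equiv.Perm.decomposeFin_symm_apply_zero i₀.succ σ
          have hs : ∀ k : Fin n, τ k.succ = Equiv.swap 0 i₀.succ (σ k).succ := fun k => by
            rw [hτ, Equiv.Perm.decomposeFin_symm_apply_succ]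
          have herase : (Finset.univ.filter (fun b : Fin n => b ≤ σ b)).erase i₀
              = Finset.univ.filter (fun k : Fin n => k ≤ σ k ∧ ¬ k = i₀) := by
            ext k
            simp only [Finset.mem_erase, Finset.mem_filter, Finset.mem_univ, true_and]
            tauto
          rw [herase, Finset.prod_filter, Finset.prod_filter, Fin.prod_univ_succ]
          rw [h0]
          rw [if_pos (Fin.zero_le _)]
          have hw0 : lW V D (Fin.cons j T) x 0 i₀.succ = V (T i₀) j := by
            rw [lW]
            rw [if_neg (fun hh => Fin.succ_ne_zero i₀ hh.symm)]
            rw [Fin.cons_zero, Fin.cons_succ, hsym]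
          rw [hw0, mul_comm]
          congr 1
          refine Finset.prod_congr rfl fun k _ => ?_
          by_cases hk : k = i₀
          · subst hk
            rw [hs k, hfix, Equiv.swap_apply_right,
              if_neg (fun hh => Fin.succ_ne_zero k (Fin.le_zero_iff.mp hh)),
              if_neg (by simp)]
          · have hσk : σ k ≠ i₀ := fun hh => hk (σ.injective (hh.trans hfix.symm))
            have e1 : τ k.succ = (σ k).succ := by
              rw [hs k]
              exact Equiv.swap_apply_of_ne_of_ne (Fin.succ_ne_zero _)
                (fun hh => hσk (Fin.succ_injective _ hh))
            rw [e1]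
            by_cases hle : k ≤ σ k
            · rw [if_pos (Fin.succ_le_succ_iff.mpr hle), if_pos ⟨hle, hk⟩, lW_cons_succ]
            · rw [if_neg (fun hh => hle (Fin.succ_le_succ_iff.mp hh)),
                if_neg (fun hh => hle hh.1)]
        · rw [if_neg (fun hcon => hfix ((inv_succ_iff σ i₀).mp hcon).2)]
          have hz : (if i₀ = σ i₀ then V (T i₀) j else 0) = 0 :=
            if_neg (fun hh => hfix hh.symm)
          rw [hz, mul_zero, ite_self]
      · rw [if_neg h]
        refine (Finset.sum_eq_zero fun i₀ _ => ?_).trans (by simp)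
        exact if_neg (fun hcon => h ((inv_succ_iff σ i₀).mp hcon).1)
  calc lG V D (Fin.cons j T) x
      = ∑ τ : Equiv.Perm (Fin (n + 1)),
          (if τ * τ = 1 then
            ∏ a ∈ Finset.univ.filter (fun a => a ≤ τ a), lW V D (Fin.cons j T) x a (τ a)
          else 0) := by
        rw [lG, Finset.sum_filter]
    _ = ∑ pσ : Fin (n + 1) × Equiv.Perm (Fin n),
          (if (Equiv.Perm.decomposeFin.symm pσ) * (Equiv.Perm.decomposeFin.symm pσ) = 1 then
            ∏ a ∈ Finset.univ.filter (fun a => a ≤ (Equiv.Perm.decomposeFin.symm pσ) a),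
              lW V D (Fin.cons j T) x a ((Equiv.Perm.decomposeFin.symm pσ) a)
          else 0) :=
        (Equiv.sum_comp Equiv.Perm.decomposeFin.symm _).symm
    _ = ∑ σ : Equiv.Perm (Fin n), ∑ p : Fin (n + 1),
          (if (Equiv.Perm.decomposeFin.symm (p, σ)) * (Equiv.Perm.decomposeFin.symm (p, σ)) = 1 then
            ∏ a ∈ Finset.univ.filter (fun a => a ≤ (Equiv.Perm.decomposeFin.symm (p, σ)) a),
              lW V D (Fin.cons j T) x a ((Equiv.Perm.decomposeFin.symm (p, σ)) a)
          else 0) := by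
        rw [Fintype.sum_prod_type, Finset.sum_comm]
    _ = ∑ σ : Equiv.Perm (Fin n),
          ((if σ * σ = 1 then
              lL V D j x * ∏ a ∈ Finset.univ.filter (fun a => a ≤ σ a), lW V D T x a (σ a)
            else 0)
          + (if σ * σ = 1 then
              ∑ a ∈ Finset.univ.filter (fun a => a ≤ σ a),
                (∏ b ∈ (Finset.univ.filter (fun b => b ≤ σ b)).erase a, lW V D T x b (σ b))
                  * (if a = σ a then V (T a) j else 0)
            else 0)) := Finset.sum_congr rfl fun σ _ => main σ
    _ = _ := by
        rw [Finset.sum_add_distrib]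
        congr 1
        · rw [lG, ← Finset.sum_filter, Finset.mul_sum]
        · rw [← Finset.sum_filter]

lemma hasFDerivAt_lW {n : ℕ} (T : Fin n → Fin N) (a b : Fin n) (x : Fin N → ℂ) :
    HasFDerivAt (fun y => lW V D T y a b) (if a = b then lLc V (T a) else 0) x := by
  rcases eq_or_ne a b with h | h
  · subst h
    simpa [lW] using hasFDerivAt_lL V D (T a) x
  · simpa [lW, h] using hasFDerivAt_const (V (T a) (T b)) x

lemma key (hV : V.IsSymm) {n : ℕ} (T : Fin n → Fin N) (j : Fin N) (x : Fin N → ℂ) :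
    pderivCoord N j (fun y => lG V D T y * Complex.exp (lQ V D y)) x
      = lG V D (Fin.cons j T) x * Complex.exp (lQ V D x) := by
  classical
  have hP : ∀ σ : Equiv.Perm (Fin n),
      HasFDerivAt (fun y => ∏ a ∈ Finset.univ.filter (fun a => a ≤ σ a), lW V D T y a (σ a))
        (∑ a ∈ Finset.univ.filter (fun a => a ≤ σ a),
          (∏ b ∈ (Finset.univ.filter (fun b => b ≤ σ b)).erase a, lW V D T x b (σ b)) •
            (if a = σ a then lLc V (T a) else 0)) x :=
    fun σ => HasFDerivAt.finset_prod (fun a _ => hasFDerivAt_lW V D T a (σ a) x)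
  have hG : HasFDerivAt (lG V D T)
      (∑ σ ∈ Finset.univ.filter (fun σ : Equiv.Perm (Fin n) => σ * σ = 1),
        ∑ a ∈ Finset.univ.filter (fun a => a ≤ σ a),
          (∏ b ∈ (Finset.univ.filter (fun b => b ≤ σ b)).erase a, lW V D T x b (σ b)) •
            (if a = σ a then lLc V (T a) else 0)) x :=
    HasFDerivAt.fun_sum (fun σ _ => hP σ)
  have hE := (hasFDerivAt_lQ V D hV x).cexp
  have hF := hG.fun_mul hE
  have hpd : pderivCoord N j (fun y => lG V D T y * Complex.exp (lQ V D y)) x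
      = (fderiv ℂ (fun y => lG V D T y * Complex.exp (lQ V D y)) x) (Pi.single j 1) := rfl
  rw [hpd, hF.fderiv]
  have e1 : (∑ k, lL V D k x • (ContinuousLinearMap.proj k : (Fin N → ℂ) →L[ℂ] ℂ))
      (Pi.single j 1) = lL V D j x := by
    simp [ContinuousLinearMap.sum_apply, Pi.single_apply, mul_ite]
  have e2 : (∑ σ ∈ Finset.univ.filter (fun σ : Equiv.Perm (Fin n) => σ * σ = 1),
        ∑ a ∈ Finset.univ.filter (fun a => a ≤ σ a),
          (∏ b ∈ (Finset.univ.filter (fun b => b ≤ σ b)).erase a, lW V D T x b (σ b)) •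
            (if a = σ a then lLc V (T a) else 0)) (Pi.single j 1)
      = ∑ σ ∈ Finset.univ.filter (fun σ : Equiv.Perm (Fin n) => σ * σ = 1),
          ∑ a ∈ Finset.univ.filter (fun a => a ≤ σ a),
            (∏ b ∈ (Finset.univ.filter (fun b => b ≤ σ b)).erase a, lW V D T x b (σ b))
              * (if a = σ a then V (T a) j else 0) := by
    simp only [ContinuousLinearMap.sum_apply, ContinuousLinearMap.smul_apply, smul_eq_mul]
    refine Finset.sum_congr rfl fun σ _ => Finset.sum_congr rfl fun a _ => ?_
    congr 1
    by_cases h : a = σ a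
    · rw [if_pos h, if_pos h, lLc_single]
    · rw [if_neg h, if_neg h, ContinuousLinearMap.zero_apply]
  simp only [ContinuousLinearMap.add_apply, ContinuousLinearMap.smul_apply]
  rw [e1, e2]
  simp only [smul_eq_mul]
  rw [lG_cons V D hV T j x]
  ring

lemma lG_zero (T : Fin 0 → Fin N) (x : Fin N → ℂ) : lG V D T x = 1 := by
  classical
  have h1 : ∀ σ : Equiv.Perm (Fin 0), σ * σ = 1 := fun σ => Subsingleton.elim _ _
  rw [lG, Finset.filter_true_of_mem (fun σ _ => h1 σ)]
  have h2 : ∀ σ : Equiv.Perm (Fin 0),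
      (∏ a ∈ Finset.univ.filter (fun a => a ≤ σ a), lW V D T x a (σ a)) = 1 := fun σ => by
    simp
  rw [Finset.sum_congr rfl fun σ _ => h2 σ, Finset.sum_const]
  simp

lemma lG_eval_zero {n : ℕ} (T : Fin n → Fin N) :
    lG V D T 0
      = lhafnian (Matrix.of fun a b : Fin n => if a = b then D (T a) else V (T a) (T b)) := by
  rw [lG, lhafnian]
  refine Finset.sum_congr rfl fun σ _ => Finset.prod_congr rfl fun a _ => ?_
  by_cases h : a = σ a
  · rw [lW, if_pos h, Matrix.of_apply, if_pos h, lL]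
    simp
  · rw [lW, if_neg h, Matrix.of_apply, if_neg h]

lemma lhaf_cast {r : ℕ} (e : Fin r → Fin N) (L : List (Fin N)) (h : L.length = r)
    (he : ∀ i : Fin L.length, L.get i = e (Fin.cast h i)) :
    lhafnian (Matrix.of fun a b : Fin L.length =>
        if a = b then D (L.get a) else V (L.get a) (L.get b))
      = lhafnian (Matrix.of fun a b : Fin r => if a = b then D (e a) else V (e a) (e b)) := by
  subst h
  have hL : L.get = e := funext fun i => by simpa using he i
  rw [hL]

lemma pderivList_exp (hV : V.IsSymm) (L : List (Fin N)) :
    pderivList N L (fun y => Complex.exp (lQ V D y))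
      = fun x => lG V D L.get x * Complex.exp (lQ V D x) := by
  induction L with
  | nil =>
      funext x
      simp only [pderivList]
      rw [lG_zero, one_mul]
  | cons j L ih =>
      have hget : (j :: L).get = Fin.cons j L.get := by
        funext i
        refine Fin.cases ?_ (fun k => ?_) i <;> rfl
      simp only [pderivList, ih]
      funext x
      rw [hget, key V D hV L.get j x]

end Aux

/-- Iterated partial derivatives of `exp((1/2) xᵀ V x + Dᵀ x)` at `x = 0`, taken along a
multiset of indices `e : Fin r → Fin (2m)` (with repetitions), equal the loop hafnian
of the `r × r` matrix obtained from `V` by selecting rows and columns according to `e`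
and replacing the diagonal by the corresponding entries of `D`. -/
theorem pderiv_exp_quadratic_eq_lhafnian (m r : ℕ)
    (V : Matrix (Fin (2 * m)) (Fin (2 * m)) ℂ) (hV : V.IsSymm)
    (D : Fin (2 * m) → ℂ) (e : Fin r → Fin (2 * m)) :
    pderivList (2 * m) (List.ofFn e)
      (fun x => Complex.exp ((1 / 2 : ℂ) * (∑ i, ∑ j, x i * V i j * x j) + ∑ i, D i * x i))
      0
    = lhafnian (Matrix.of fun i j : Fin r =>
        if i = j then D (e i) else V (e i) (e j)) := by
  have h := pderivList_exp V D hV (List.ofFn e)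
  have hfun : (fun x : Fin (2 * m) → ℂ =>
      Complex.exp ((1 / 2 : ℂ) * (∑ i, ∑ j, x i * V i j * x j) + ∑ i, D i * x i))
      = fun y => Complex.exp (lQ V D y) := rfl
  rw [hfun, h]
  show lG V D (List.ofFn e).get 0 * Complex.exp (lQ V D 0) = _
  have h0 : lQ V D 0 = 0 := by simp [lQ]
  rw [h0, Complex.exp_zero, mul_one, lG_eval_zero]
  exact lhaf_cast V D e (List.ofFn e) (List.length_ofFn (f := e)) (fun i => List.get_ofFn e i)
end

section
/- Let m ≥ 2. There exist no complex numbers d⁰, d¹ and s_1⁰,…,s_{2m}⁰, s_1¹,…,s_{2m}¹ such that the (unnormalized) m-mode state (d¹ + Σ_k s_k¹ a_k† + Σ_k s_{m+k}¹ a_k)(d⁰ + Σ_l s_l⁰ a_l† + Σ_l s_{m+l}⁰ a_l)|0⟩^{⊗m} equals (|20⟩ + |01⟩) ⊗ |0⟩^{⊗(m-2)} up to a nonzero scalar. Concretely, in Fock coefficients: the state produced by the two affine combinations of ladder operators applied to the vacuum equals √2 Σ_k s_k⁰ s_k¹ |2_k⟩ + Σ_{k≠l} s_k⁰ s_l¹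 |1_k+1_l⟩ + Σ_k (d¹ s_k⁰ + d⁰ s_k¹)|1_k⟩ + (d⁰d¹ + Σ_k s_k⁰ s_{m+k}¹)|0⟩, and no choice of parameters makes this proportional to |2_1⟩ + |1_2⟩. -/
open scoped Classical

section helpers
variable {m : ℕ}

private lemma hd2_d2 (a : Fin m) (k : Fin m) :
    ((fun j => if j = a then 2 else 0) : Fin m → ℕ) = (fun j => if j = k then 2 else 0) ↔ k = a := by
  constructor
  · intro h
    have h1 := congrFun h k
    simpa using h1
  · rintro rfl; rfl

private lemma hd2_d11 (a : Fin m) (k l : Fin m) :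
    ¬ (k ≠ l ∧ ((fun j => if j = a then 2 else 0) : Fin m → ℕ)
        = (fun j => (if j = k then 1 else 0) + (if j = l then 1 else 0))) := by
  rintro ⟨hkl, h⟩
  have h1 := congrFun h k
  simp only [if_pos rfl, if_neg hkl] at h1
  split_ifs at h1 <;> omega

private lemma hd2_d1 (a : Fin m) (k : Fin m) :
    ¬ ((fun j => if j = a then 2 else 0) : Fin m → ℕ) = (fun j => if j = k then 1 else 0) := by
  intro h
  have h1 := congrFun h a
  have h2 := congrFun h k
  simp only [if_pos rfl] at h1 h2
  split_ifs at h1 h2 <;> omega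

private lemma hd2_d0 (a : Fin m) :
    ¬ ((fun j => if j = a then 2 else 0) : Fin m → ℕ) = (fun _ => 0) := by
  intro h
  have h1 := congrFun h a
  simp at h1

private lemma hd1_d2 (a : Fin m) (k : Fin m) :
    ¬ ((fun j => if j = a then 1 else 0) : Fin m → ℕ) = (fun j => if j = k then 2 else 0) := by
  intro h
  exact hd2_d1 k a h.symm

private lemma hd1_d11 (a : Fin m) (k l : Fin m) :
    ¬ (k ≠ l ∧ ((fun j => if j = a then 1 else 0) : Fin m → ℕ)
        = (fun j => (if j = k then 1 else 0) + (if j = l then 1 else 0))) := by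
  rintro ⟨hkl, h⟩
  have h1 := congrFun h k
  have h2 := congrFun h l
  simp only [if_pos rfl, if_neg hkl, if_neg (Ne.symm hkl)] at h1 h2
  clear h
  split_ifs at h1 h2 <;> omega

private lemma hd1_d1 (a : Fin m) (k : Fin m) :
    ((fun j => if j = a then 1 else 0) : Fin m → ℕ) = (fun j => if j = k then 1 else 0) ↔ k = a := by
  constructor
  · intro h
    have h1 := congrFun h k
    simpa using h1
  · rintro rfl; rfl

private lemma hd1_d0 (a : Fin m) :
    ¬ ((fun j => if j = a then 1 else 0) : Fin m → ℕ) = (fun _ => 0) := by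
  intro h
  have h1 := congrFun h a
  simp at h1

private lemma hd11_d2 (a b : Fin m) (hab : a ≠ b) (k : Fin m) :
    ¬ ((fun j => (if j = a then 1 else 0) + (if j = b then 1 else 0)) : Fin m → ℕ)
        = (fun j => if j = k then 2 else 0) := by
  intro h
  exact hd2_d11 k a b ⟨hab, h.symm⟩

private lemma hd11_d11 (a b : Fin m) (hab : a ≠ b) (k l : Fin m) :
    (k ≠ l ∧ ((fun j => (if j = a then 1 else 0) + (if j = b then 1 else 0)) : Fin m → ℕ)
        = (fun j => (if j = k then 1 else 0) + (if j = l then 1 else 0)))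
      ↔ ((k = a ∧ l = b) ∨ (k = b ∧ l = a)) := by
  constructor
  · rintro ⟨hkl, h⟩
    have h1 := congrFun h a
    have h2 := congrFun h b
    simp only [if_pos rfl, if_neg hab, if_neg (Ne.symm hab)] at h1 h2
    clear h
    split_ifs at h1 h2 <;> simp_all
  · rintro (⟨rfl, rfl⟩ | ⟨rfl, rfl⟩)
    · exact ⟨hab, rfl⟩
    · refine ⟨Ne.symm hab, ?_⟩
      funext j
      exact (add_comm _ _)

private lemma hd11_d1 (a b : Fin m) (hab : a ≠ b) (k : Fin m) :
    ¬ ((fun j => (if j = a then 1 else 0) + (if j = b then 1 else 0)) : Fin m → ℕ)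
        = (fun j => if j = k then 1 else 0) := by
  intro h
  exact hd1_d11 k a b ⟨hab, h.symm⟩

private lemma hd11_d0 (a b : Fin m) :
    ¬ ((fun j => (if j = a then 1 else 0) + (if j = b then 1 else 0)) : Fin m → ℕ)
        = (fun _ => 0) := by
  intro h
  have h1 := congrFun h a
  simp at h1

end helpers

/-- For `m ≥ 2`, no choice of complex numbers `d⁰, d¹`, `s⁰, s¹` (creation parts) and
`t⁰, t¹` (annihilation parts) makes the state
`(d¹ + Σ_k s¹_k a_k† + Σ_k t¹_k a_k)(d⁰ + Σ_l s⁰_l a_l† + Σ_l t⁰_l a_l)|0⟩^{⊗m}`,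
whose Fock coefficients are
`√2 Σ_k s⁰_k s¹_k |2_k⟩ + Σ_{k≠l} s⁰_k s¹_l |1_k+1_l⟩ + Σ_k (d¹ s⁰_k + d⁰ s¹_k)|1_k⟩
+ (d⁰d¹ + Σ_k s⁰_k t¹_k)|0⟩`,
proportional (with nonzero constant) to `|2_1⟩ + |1_2⟩ = (|20⟩+|01⟩)⊗|0⟩^{⊗(m-2)}`. -/
theorem no_two_photon_additions_give_2001 (m : ℕ) (hm : 2 ≤ m) :
    ¬ ∃ (d0 d1 : ℂ) (s0 s1 t0 t1 : Fin m → ℂ) (c : ℂ), c ≠ 0 ∧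
      (fun n : Fin m → ℕ =>
          (Real.sqrt 2 : ℂ) *
              (∑ k, if n = (fun j => if j = k then 2 else 0) then s0 k * s1 k else 0)
            + (∑ k, ∑ l,
                if k ≠ l ∧ n = (fun j => (if j = k then 1 else 0) + (if j = l then 1 else 0))
                then s0 k * s1 l else 0)
            + (∑ k, if n = (fun j => if j = k then 1 else 0)
                then d1 * s0 k + d0 * s1 k else 0)
            + (if n = (fun _ => 0) then d0 * d1 + ∑ k, s0 k * t1 k else 0))
        = (fun n : Fin m → ℕ =>
            c * ((if n = (fun j => if j = (⟨0, by omega⟩ : Fin m) then 2 else 0) then 1 else 0)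
              + (if n = (fun j => if j = (⟨1, by omega⟩ : Fin m) then 1 else 0) then 1 else 0))) := by
  rintro ⟨d0, d1, s0, s1, t0, t1, c, hc, h⟩
  have hm0 : 0 < m := by omega
  have hm1 : 1 < m := by omega
  set i0 : Fin m := ⟨0, hm0⟩ with hi0
  set i1 : Fin m := ⟨1, hm1⟩ with hi1
  have h01 : i0 ≠ i1 := by simp [hi0, hi1, Fin.ext_iff]
  have h10 : i1 ≠ i0 := h01.symm
  -- evaluate at |2_{i0}⟩
  have hA := congrFun h (fun j => if j = i0 then 2 else 0)
  simp only [hd2_d2, hd2_d11, hd2_d1, hd2_d0, if_false, ite_false] at hA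
  simp [Finset.sum_ite_eq', h01, h10] at hA
  -- evaluate at |2_{i1}⟩
  have hB := congrFun h (fun j => if j = i1 then 2 else 0)
  simp only [hd2_d2, hd2_d11, hd2_d1, hd2_d0, if_false, ite_false] at hB
  simp [Finset.sum_ite_eq', h01, h10] at hB
  -- evaluate at |1_{i1}⟩
  have hD := congrFun h (fun j => if j = i1 then 1 else 0)
  simp only [hd1_d2, hd1_d11, hd1_d1, hd1_d0, if_false, ite_false] at hD
  simp [Finset.sum_ite_eq', h01, h10] at hD
  -- evaluate at |1_{i0} + 1_{i1}⟩
  have hC := congrFun h (fun j => (if j = i0 then 1 else 0) + (if j = i1 then 1 else 0))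
  simp only [hd11_d2 i0 i1 h01, hd11_d11 i0 i1 h01, hd11_d1 i0 i1 h01, hd11_d0,
    if_false, ite_false] at hC
  have hsplit : ∀ k l : Fin m,
      (if (k = i0 ∧ l = i1) ∨ (k = i1 ∧ l = i0) then s0 k * s1 l else 0)
        = (if k = i0 ∧ l = i1 then s0 k * s1 l else 0)
          + (if k = i1 ∧ l = i0 then s0 k * s1 l else 0) := by
    intro k l
    by_cases h1 : k = i0 ∧ l = i1
    · have h2 : ¬(k = i1 ∧ l = i0) := by
        rintro ⟨h2a, h2b⟩; exact h01 (h1.1.symm.trans h2a)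
      rw [if_pos (Or.inl h1), if_pos h1, if_neg h2, add_zero]
    · by_cases h2 : k = i1 ∧ l = i0
      · rw [if_pos (Or.inr h2), if_neg h1, if_pos h2, zero_add]
      · rw [if_neg (by tauto), if_neg h1, if_neg h2, add_zero]
  have key : (∑ k : Fin m, ∑ l : Fin m,
      if (k = i0 ∧ l = i1) ∨ (k = i1 ∧ l = i0) then s0 k * s1 l else 0)
        = s0 i0 * s1 i1 + s0 i1 * s1 i0 := by
    have inner : ∀ k : Fin m,
        (∑ l : Fin m, if (k = i0 ∧ l = i1) ∨ (k = i1 ∧ l = i0) then s0 k * s1 l else 0)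
          = (if k = i0 then s0 k * s1 i1 else 0) + (if k = i1 then s0 k * s1 i0 else 0) := by
      intro k
      simp only [hsplit, Finset.sum_add_distrib]
      by_cases hk0 : k = i0 <;> by_cases hk1 : k = i1 <;>
        simp [hk0, hk1, ite_and, Finset.sum_ite_eq']
    simp [inner, Finset.sum_add_distrib, Finset.sum_ite_eq', h01, h10]
  rw [key] at hC
  simp at hC
  -- now pure algebra
  have hs2 : (Real.sqrt 2 : ℂ) ≠ 0 := by
    simp only [ne_eq, Complex.ofReal_eq_zero]
    positivity
  have hprod : s0 i1 * s1 i1 = 0 := by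
    rcases hB with h' | h' <;> simp [h']
  have hs00 : s0 i0 * s1 i0 ≠ 0 := by
    intro h'
    apply hc
    rw [← hA, h', mul_zero]
  have hsq : (s0 i0 * s1 i1) ^ 2 = 0 := by
    linear_combination (s0 i0 * s1 i1) * hC - (s0 i0 * s1 i0) * hprod
  have h0011 : s0 i0 * s1 i1 = 0 := by
    exact pow_eq_zero_iff (n := 2) (by norm_num) |>.mp hsq
  have hs11 : s1 i1 = 0 := by
    rcases mul_eq_zero.mp h0011 with h' | h'
    · exact absurd h' (left_ne_zero_of_mul hs00)
    · exact h'
  have hs01 : s0 i1 = 0 := by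
    have : s0 i1 * s1 i0 = 0 := by linear_combination hC - h0011
    rcases mul_eq_zero.mp this with h' | h'
    · exact h'
    · exact absurd h' (right_ne_zero_of_mul hs00)
  apply hc
  rw [← hD, hs01, hs11, mul_zero, mul_zero, add_zero]
end

section
/- If moreover each row (s_{j,1},…,s_{j,2m}) comes from a symplectic matrix (so that the creation-operator part (s_{j,1},…,s_{j,m}) is nonzero), then the vector L_n⋯L_1|0⟩^{⊗m} has a nonzero component on some Fock state of total photon number exactly n; equivalently, the leading total-degree-n part of its stellar function is Π_{j=1}^n (Σ_{l=1}^m s_{j,l} z_l), which is a nonzero polynomial as a product of nonzero linear forms. -/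
open scoped Classical

/-- Creation operator `a_k†` on Fock coefficients: `(a_k† ψ)(n) = √(n_k) ψ(n − 1_k)`,
and `0` when `n_k = 0`. -/
noncomputable def create (m : ℕ) (k : Fin m) (ψ : (Fin m → ℕ) → ℂ) :
    (Fin m → ℕ) → ℂ :=
  fun n => if n k = 0 then 0
    else (Real.sqrt (n k) : ℂ) * ψ (Function.update n k (n k - 1))

/-- Annihilation operator `a_k` on Fock coefficients:
`(a_k ψ)(n) = √(n_k + 1) ψ(n + 1_k)`. -/
noncomputable def annihilate (m : ℕ) (k : Fin m) (ψ : (Fin m → ℕ) → ℂ) :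
    (Fin m → ℕ) → ℂ :=
  fun n => (Real.sqrt (n k + 1) : ℂ) * ψ (Function.update n k (n k + 1))

/-- Affine combination of ladder operators
`L = d + Σ_l (s_l a_l† + t_l a_l)` acting on Fock coefficients. -/
noncomputable def affineLadder (m : ℕ) (d : ℂ) (s t : Fin m → ℂ)
    (ψ : (Fin m → ℕ) → ℂ) : (Fin m → ℕ) → ℂ :=
  fun n => d * ψ n + (∑ l, s l * create m l ψ n) + ∑ l, t l * annihilate m l ψ n

/-- The `m`-mode vacuum. -/
noncomputable def vacuum (m : ℕ) : (Fin m → ℕ) → ℂ :=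
  fun n => if n = fun _ => 0 then 1 else 0

/-- `L_j ⋯ L_1 |0⟩` for `j` affine combinations of ladder operators. -/
noncomputable def appliedLadders (m : ℕ) (d : ℕ → ℂ) (s t : ℕ → Fin m → ℂ) :
    ℕ → ((Fin m → ℕ) → ℂ)
  | 0 => vacuum m
  | j + 1 => affineLadder m (d j) (s j) (t j) (appliedLadders m d s t j)

/-! In the stellar representation `a_l†` is multiplication by `z_l`, while `a_l` lowers the
total photon number. So `L_j` raises the maximal photon number by at most one, and on the
degree-`(N+1)` component only its creation part contributes: it multiplies the degree-`N`
component of the stellar function by the linear form `Σ_l s_{j,l} z_l`. Starting from the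
vacuum, the top component after `n` steps is the product of `n` nonzero linear forms, which is a
nonzero polynomial, so it does not vanish at some point and some coefficient on the shell
`Σ p = n` is nonzero. -/

@[to_additive]
theorem Finset.prod_apply_update_of_eq_mul {ι α M : Type*} [Fintype ι] [DecidableEq ι]
    [CommMonoid M] (g : ι → α → M) (q : ι → α) (k : ι) (v : α) (c : M)
    (h : g k v = c * g k (q k)) :
    ∏ i, g i (Function.update q k v i) = c * ∏ i, g i (q i) := by
  rw [← Finset.mul_prod_erase _ _ (Finset.mem_univ k),
    ← Finset.mul_prod_erase _ (fun i => g i (q i)) (Finset.mem_univ k), Function.update_self, h,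
    mul_assoc]
  congr 2
  refine Finset.prod_congr rfl fun i hi => ?_
  rw [Function.update_of_ne (Finset.ne_of_mem_erase hi)]

section PhotonNumber

variable {m : ℕ}

theorem sum_update_succ (q : Fin m → ℕ) (k : Fin m) :
    ∑ i, Function.update q k (q k + 1) i = ∑ i, q i + 1 := by
  rw [Finset.sum_apply_update_of_eq_add (fun _ x => x) q k (q k + 1) 1 (add_comm _ _), add_comm]

theorem exists_eq_update_succ {p : Fin m → ℕ} {k : Fin m} (hk : p k ≠ 0) :
    ∃ q : Fin m → ℕ, p = Function.update q k (q k + 1) :=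
  ⟨Function.update p k (p k - 1), by simp [Nat.sub_add_cancel (Nat.pos_of_ne_zero hk)]⟩

theorem create_apply_update_succ (k : Fin m) (ψ : (Fin m → ℕ) → ℂ) (q : Fin m → ℕ) :
    create m k ψ (Function.update q k (q k + 1)) = (Real.sqrt (q k + 1) : ℂ) * ψ q := by
  simp [create]

theorem create_apply_of_eq_zero (k : Fin m) (ψ : (Fin m → ℕ) → ℂ) {p : Fin m → ℕ}
    (hk : p k = 0) : create m k ψ p = 0 := by
  simp [create, hk]

def PhotonNumberLE (N : ℕ) (ψ : (Fin m → ℕ) → ℂ) : Prop :=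
  ∀ p : Fin m → ℕ, N < ∑ i, p i → ψ p = 0

theorem PhotonNumberLE.mono {N N' : ℕ} {ψ : (Fin m → ℕ) → ℂ} (h : PhotonNumberLE N ψ)
    (hN : N ≤ N') : PhotonNumberLE N' ψ :=
  fun p hp => h p (by omega)

theorem photonNumberLE_vacuum : PhotonNumberLE 0 (vacuum m) := by
  intro p hp
  have hp0 : p ≠ fun _ => 0 := by
    rintro rfl
    simp at hp
  simp [vacuum, hp0]

theorem PhotonNumberLE.create {N : ℕ} {ψ : (Fin m → ℕ) → ℂ} (h : PhotonNumberLE N ψ)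
    (k : Fin m) : PhotonNumberLE (N + 1) (create m k ψ) := by
  intro p hp
  by_cases hk : p k = 0
  · exact create_apply_of_eq_zero k ψ hk
  obtain ⟨q, rfl⟩ := exists_eq_update_succ hk
  rw [sum_update_succ] at hp
  rw [create_apply_update_succ, h q (by omega), mul_zero]

theorem PhotonNumberLE.annihilate {N : ℕ} {ψ : (Fin m → ℕ) → ℂ}
    (h : PhotonNumberLE (N + 1) ψ) (k : Fin m) : PhotonNumberLE N (annihilate m k ψ) := by
  intro p hp
  have hq := h (Function.update p k (p k + 1)) (by rw [sum_update_succ]; omega)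
  simp [_root_.annihilate, hq]

theorem PhotonNumberLE.affineLadder {N : ℕ} {ψ : (Fin m → ℕ) → ℂ} (h : PhotonNumberLE N ψ)
    (d : ℂ) (s t : Fin m → ℂ) : PhotonNumberLE (N + 1) (affineLadder m d s t ψ) := by
  intro p hp
  have hcre (l : Fin m) := (h.create l) p hp
  have hann (l : Fin m) := ((h.mono N.le_succ).annihilate l).mono N.le_succ p hp
  simp [_root_.affineLadder, h p (by omega), hcre, hann]

theorem photonNumberLE_appliedLadders (d : ℕ → ℂ) (s t : ℕ → Fin m → ℂ) (n : ℕ) :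
    PhotonNumberLE n (appliedLadders m d s t n) := by
  induction n with
  | zero => exact photonNumberLE_vacuum
  | succ n ih => exact ih.affineLadder _ _ _

theorem affineLadder_apply_of_sum_eq {N : ℕ} {ψ : (Fin m → ℕ) → ℂ} (h : PhotonNumberLE N ψ)
    (d : ℂ) (s t : Fin m → ℂ) {p : Fin m → ℕ} (hp : ∑ i, p i = N + 1) :
    affineLadder m d s t ψ p = ∑ l, s l * create m l ψ p := by
  have hann (l : Fin m) := ((h.mono N.le_succ).annihilate l) p (by omega)
  simp [affineLadder, h p (by omega), hann]

end PhotonNumber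

section Stellar

variable {m : ℕ}

noncomputable def stellarTerm (ψ : (Fin m → ℕ) → ℂ) (z : Fin m → ℂ) (p : Fin m → ℕ) : ℂ :=
  ψ p / (Real.sqrt (∏ i, ((p i).factorial : ℝ)) : ℂ) * ∏ i, z i ^ p i

noncomputable def stellarHomogeneousPart (N : ℕ) (ψ : (Fin m → ℕ) → ℂ) (z : Fin m → ℂ) : ℂ :=
  ∑ p ∈ Finset.Nat.antidiagonalTuple m N, stellarTerm ψ z p

theorem tsum_ite_eq_stellarHomogeneousPart (N : ℕ) (ψ : (Fin m → ℕ) → ℂ) (z : Fin m → ℂ) :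
    (∑' p : Fin m → ℕ,
        if (∑ i, p i) = N then
          ψ p / (Real.sqrt (∏ i, ((p i).factorial : ℝ)) : ℂ) * ∏ i, z i ^ p i
        else 0)
      = stellarHomogeneousPart N ψ z := by
  rw [tsum_eq_sum (s := Finset.Nat.antidiagonalTuple m N)
    fun p hp => if_neg (mt Finset.Nat.mem_antidiagonalTuple.mpr hp)]
  exact Finset.sum_congr rfl fun p hp => if_pos (Finset.Nat.mem_antidiagonalTuple.mp hp)

theorem stellarTerm_create_update_succ (k : Fin m) (ψ : (Fin m → ℕ) → ℂ) (z : Fin m → ℂ)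
    (q : Fin m → ℕ) :
    stellarTerm (create m k ψ) z (Function.update q k (q k + 1)) = z k * stellarTerm ψ z q := by
  have hfac : ∏ i, ((Function.update q k (q k + 1) i).factorial : ℝ)
      = (q k + 1) * ∏ i, ((q i).factorial : ℝ) :=
    Finset.prod_apply_update_of_eq_mul (fun _ x => (x.factorial : ℝ)) q k _ _
      (by push_cast [Nat.factorial_succ]; ring)
  have hmon : ∏ i, z i ^ Function.update q k (q k + 1) i = z k * ∏ i, z i ^ q i :=
    Finset.prod_apply_update_of_eq_mul (fun i x => z i ^ x) q k _ _ (pow_succ' _ _)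
  have hsqrt : ((Real.sqrt (q k + 1) : ℝ) : ℂ) ≠ 0 := by
    rw [Complex.ofReal_ne_zero, Real.sqrt_ne_zero']
    positivity
  rw [stellarTerm, stellarTerm, create_apply_update_succ, hfac, hmon,
    Real.sqrt_mul (by positivity), Complex.ofReal_mul, mul_div_mul_left _ _ hsqrt]
  ring

theorem stellarTerm_create_of_eq_zero (k : Fin m) (ψ : (Fin m → ℕ) → ℂ) (z : Fin m → ℂ)
    {p : Fin m → ℕ} (hk : p k = 0) : stellarTerm (create m k ψ) z p = 0 := by
  rw [stellarTerm, create_apply_of_eq_zero k ψ hk, zero_div, zero_mul]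

theorem stellarHomogeneousPart_create (N : ℕ) (k : Fin m) (ψ : (Fin m → ℕ) → ℂ)
    (z : Fin m → ℂ) :
    stellarHomogeneousPart (N + 1) (create m k ψ) z = z k * stellarHomogeneousPart N ψ z := by
  rw [stellarHomogeneousPart, stellarHomogeneousPart, Finset.mul_sum]
  symm
  refine Finset.sum_of_injOn (fun q => Function.update q k (q k + 1)) ?_ ?_ ?_ ?_
  · intro q _ q' _ h
    funext i
    have hi := congrFun h i
    by_cases hik : i = k
    · subst hik
      simpa using hi
    · simpa [hik] using hi
  · intro q hq
    simp only [Finset.mem_coe, Finset.Nat.mem_antidiagonalTuple] at hq ⊢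
    rw [sum_update_succ, hq]
  · intro p hp hnot
    apply stellarTerm_create_of_eq_zero
    by_contra hk
    obtain ⟨q, rfl⟩ := exists_eq_update_succ hk
    exact hnot ⟨q, by simpa [Finset.Nat.mem_antidiagonalTuple, sum_update_succ] using hp, rfl⟩
  · intro q _
    exact (stellarTerm_create_update_succ k ψ z q).symm

theorem stellarHomogeneousPart_affineLadder {N : ℕ} {ψ : (Fin m → ℕ) → ℂ}
    (h : PhotonNumberLE N ψ) (d : ℂ) (s t : Fin m → ℂ) (z : Fin m → ℂ) :
    stellarHomogeneousPart (N + 1) (affineLadder m d s t ψ) z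
      = (∑ l, s l * z l) * stellarHomogeneousPart N ψ z := by
  have hterm : ∀ p ∈ Finset.Nat.antidiagonalTuple m (N + 1),
      stellarTerm (affineLadder m d s t ψ) z p = ∑ l, s l * stellarTerm (create m l ψ) z p := by
    intro p hp
    rw [stellarTerm, affineLadder_apply_of_sum_eq h d s t (Finset.Nat.mem_antidiagonalTuple.mp hp),
      Finset.sum_div, Finset.sum_mul]
    simp only [stellarTerm, mul_div_assoc, mul_assoc]
  calc stellarHomogeneousPart (N + 1) (affineLadder m d s t ψ) z
      = ∑ l, s l * stellarHomogeneousPart (N + 1) (create m l ψ) z := by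
        rw [stellarHomogeneousPart, Finset.sum_congr rfl hterm, Finset.sum_comm]
        simp only [stellarHomogeneousPart, Finset.mul_sum]
    _ = (∑ l, s l * z l) * stellarHomogeneousPart N ψ z := by
        simp only [stellarHomogeneousPart_create, Finset.sum_mul, mul_assoc]

theorem stellarHomogeneousPart_appliedLadders (d : ℕ → ℂ) (s t : ℕ → Fin m → ℂ) (n : ℕ)
    (z : Fin m → ℂ) :
    stellarHomogeneousPart n (appliedLadders m d s t n) z
      = ∏ j ∈ Finset.range n, ∑ l, s j l * z l := by
  induction n with
  | zero =>
    rw [appliedLadders, stellarHomogeneousPart, Finset.Nat.antidiagonalTuple_zero_right,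
      Finset.sum_singleton]
    simp [stellarTerm, vacuum, Pi.zero_def]
  | succ n ih =>
    rw [appliedLadders, stellarHomogeneousPart_affineLadder (photonNumberLE_appliedLadders d s t n),
      ih, Finset.prod_range_succ, mul_comm]

end Stellar

theorem MvPolynomial.exists_prod_sum_mul_ne_zero {ι σ K : Type*} [Fintype σ] [Field K]
    [Infinite K] (S : Finset ι) (a : ι → σ → K) (ha : ∀ j ∈ S, ∃ l, a j l ≠ 0) :
    ∃ z : σ → K, ∏ j ∈ S, ∑ l, a j l * z l ≠ 0 := by
  set P : MvPolynomial σ K := ∏ j ∈ S, ∑ l, C (a j l) * X l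
  have hP : P ≠ 0 := by
    refine Finset.prod_ne_zero_iff.mpr fun j hj hzero => ?_
    obtain ⟨l, hl⟩ := ha j hj
    exact hl (by simpa [Pi.single_apply] using congrArg (eval (Pi.single l 1)) hzero)
  by_contra! hvanish
  exact hP (funext fun z => by simpa [P, eval_prod, eval_sum] using hvanish z)

/-- If each affine combination `L_j = d_j + Σ_l (s_{j,l} a_l† + t_{j,l} a_l)` has a
nonzero creation part (as is the case for rows of a symplectic matrix), then
`L_n ⋯ L_1 |0⟩^{⊗m}` has a nonzero component on some Fock state of total photon
number exactly `n`; equivalently, the leading total-degree-`n` part of its stellar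
function `F⋆(z) = Σ_p (ψ_p/√(p!)) z^p` is the nonzero polynomial
`Π_{j=1}^n (Σ_{l=1}^m s_{j,l} z_l)`. -/
theorem appliedLadders_top_degree (m n : ℕ) (d : ℕ → ℂ) (s t : ℕ → Fin m → ℂ)
    (hs : ∀ j < n, ∃ l, s j l ≠ 0) :
    (∃ p : Fin m → ℕ, (∑ i, p i) = n ∧ appliedLadders m d s t n p ≠ 0) ∧
    ∀ z : Fin m → ℂ,
      (∑' p : Fin m → ℕ,
          if (∑ i, p i) = n then
            appliedLadders m d s t n p
              / (Real.sqrt (∏ i, ((p i).factorial : ℝ)) : ℂ) * ∏ i, z i ^ p i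
          else 0)
        = ∏ j ∈ Finset.range n, ∑ l, s j l * z l := by
  refine ⟨?_, fun z => (tsum_ite_eq_stellarHomogeneousPart n _ z).trans
    (stellarHomogeneousPart_appliedLadders d s t n z)⟩
  obtain ⟨z, hz⟩ := MvPolynomial.exists_prod_sum_mul_ne_zero (Finset.range n) s
    fun j hj => hs j (Finset.mem_range.mp hj)
  rw [← stellarHomogeneousPart_appliedLadders d s t n z] at hz
  obtain ⟨p, hp, hterm⟩ := Finset.exists_ne_zero_of_sum_ne_zero hz
  refine ⟨p, Finset.Nat.mem_antidiagonalTuple.mp hp, fun hzero => hterm ?_⟩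
  rw [stellarTerm, hzero, zero_div, zero_mul]
end
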